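/- Let p ≥ 2 be an integer, let l ∈ {0, 1, …, p+1}, and let Q ∈ Δ^γ_{0,l}. Then the set Q + 𝓒_{2^p} is 2^{2p+2}√n-admissible Whitney. -/
import Mathlib


open MeasureTheory Metric Set

noncomputable section

/-- Euclidean space ℝⁿ. -/
abbrev E (n : ℕ) := EuclideanSpace ℝ (Fin n)

/-- m(x) = min {1, 1/|x|} (with value 1 at x = 0). -/
def mFun {n : ℕ} (x : E n) : ℝ := if ‖x‖ ≤ 1 then 1 else ‖x‖⁻¹

/-- The dyadic cube `2^{-m}(v + [0,1)ⁿ)` of `Δ_m`. -/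
def dyadicCube (n : ℕ) (m : ℤ) (v : Fin n → ℤ) : Set (E n) :=
  {y | ∀ i, y i ∈ Set.Ico ((2 : ℝ) ^ (-m) * v i) ((2 : ℝ) ^ (-m) * (v i + 1))}

/-- The layers `L_0 = [-1,1)ⁿ` and `L_l = [-2^l,2^l)ⁿ \ [-2^{l-1},2^{l-1})ⁿ` for `l ≥ 1`. -/
def layer (n : ℕ) (l : ℕ) : Set (E n) :=
  if l = 0 then {y | ∀ i, y i ∈ Set.Ico (-1 : ℝ) 1}
  else {y | ∀ i, y i ∈ Set.Ico (-(2 : ℝ) ^ l) ((2 : ℝ) ^ l)} \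
       {y | ∀ i, y i ∈ Set.Ico (-(2 : ℝ) ^ (l - 1)) ((2 : ℝ) ^ (l - 1))}

/-- `A + 𝓒_α`: the set of centres of balls in `𝓑_α` that intersect `A`. -/
def plusC (n : ℕ) (α : ℝ) (A : Set (E n)) : Set (E n) :=
  {z | ∃ r : ℝ, 0 ≤ r ∧ r ≤ α * mFun z ∧ (ball z r ∩ A).Nonempty}

/-- A set `A ⊆ ℝⁿ` is `λ`-admissible Whitney if `d(x, ∁A) ≤ λ m(x)` for all `x ∈ A`. -/
def AdmWhitney (n : ℕ) (lam : ℝ) (A : Set (E n)) : Prop :=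
  ∀ x ∈ A, infDist x Aᶜ ≤ lam * mFun x

lemma coord_dist_le {n : ℕ} (x y : E n) (i : Fin n) : dist (x i) (y i) ≤ dist x y := by
  rw [EuclideanSpace.dist_eq]
  have h : dist (x i) (y i) = Real.sqrt (dist (x i) (y i) ^ 2) :=
    (Real.sqrt_sq dist_nonneg).symm
  rw [h]
  exact Real.sqrt_le_sqrt (Finset.single_le_sum (f := fun j => dist (x j) (y j) ^ 2)
    (fun j _ => sq_nonneg _) (Finset.mem_univ i))

lemma abs_coord_le_norm {n : ℕ} (x : E n) (i : Fin n) : |x i| ≤ ‖x‖ := by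
  have h := coord_dist_le x 0 i
  simpa [Real.dist_eq] using h

lemma norm_le_of_abs_le {n : ℕ} (q : E n) (c : ℝ) (hc : 0 ≤ c) (h : ∀ j, |q j| ≤ c) :
    ‖q‖ ≤ c * Real.sqrt n := by
  rw [EuclideanSpace.norm_eq]
  have h1 : ∑ j, ‖q j‖ ^ 2 ≤ ∑ _j : Fin n, c ^ 2 :=
    Finset.sum_le_sum fun j _ => by
      rw [Real.norm_eq_abs]
      exact pow_le_pow_left₀ (abs_nonneg _) (h j) 2
  have h2 : (∑ _j : Fin n, c ^ 2) = (n : ℝ) * c ^ 2 := by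
    simp [Finset.sum_const, mul_comm]
  calc Real.sqrt (∑ j, ‖q j‖ ^ 2) ≤ Real.sqrt ((n : ℝ) * c ^ 2) := by
        apply Real.sqrt_le_sqrt; rw [← h2]; exact h1
    _ = c * Real.sqrt n := by
        rw [Real.sqrt_mul (Nat.cast_nonneg n), Real.sqrt_sq hc, mul_comm]

lemma mFun_pos {n : ℕ} (x : E n) : 0 < mFun x := by
  unfold mFun; split_ifs with h
  · norm_num
  · exact inv_pos.2 (by linarith [not_le.1 h])

lemma mFun_le_one {n : ℕ} (x : E n) : mFun x ≤ 1 := by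
  unfold mFun; split_ifs with h
  · exact le_refl 1
  · exact inv_le_one_of_one_le₀ (le_of_lt (not_le.1 h))

lemma layer_abs_le {n l : ℕ} {q : E n} (h : q ∈ layer n l) (j : Fin n) :
    |q j| ≤ (2 : ℝ) ^ l := by
  unfold layer at h
  split_ifs at h with h0
  · subst h0
    have := h j
    rw [Set.mem_Ico] at this
    rw [pow_zero, abs_le]
    exact ⟨this.1, le_of_lt this.2⟩
  · have := h.1 j
    rw [Set.mem_Ico] at this
    rw [abs_le]
    exact ⟨by linarith [this.1], le_of_lt this.2⟩

lemma layer_exists_ge {n l : ℕ} {q : E n} (h : q ∈ layer n l) (hl : l ≠ 0) :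
    ∃ j, (2 : ℝ) ^ (l - 1) ≤ |q j| := by
  unfold layer at h
  rw [if_neg hl] at h
  obtain ⟨-, h2⟩ := h
  simp only [Set.mem_setOf_eq, not_forall] at h2
  obtain ⟨j, hj⟩ := h2
  rw [Set.mem_Ico, not_and_or, not_le, not_lt] at hj
  refine ⟨j, ?_⟩
  rcases hj with hj | hj
  · rw [abs_of_neg (by nlinarith [pow_pos (by norm_num : (0:ℝ) < 2) (l-1)])]
    linarith
  · exact le_trans hj (le_abs_self _)

set_option maxHeartbeats 1000000 in
/-- For `p ≥ 2`, `l ∈ {0,…,p+1}` and `Q ∈ Δ^γ_{0,l}`, the set `Q + 𝓒_{2^p}` is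
`2^{2p+2}√n`-admissible Whitney. -/
theorem stmt6 (n : ℕ) (hn : 1 ≤ n) (p l : ℕ) (hp : 2 ≤ p) (hl : l ≤ p + 1)
    (v : Fin n → ℤ) (hQ : dyadicCube n l v ⊆ layer n l) :
    AdmWhitney n (2 ^ (2 * p + 2) * Real.sqrt n)
      (plusC n (2 ^ p) (dyadicCube n l v)) := by
  intro x hx
  haveI : Nonempty (Fin n) := Fin.pos_iff_nonempty.1 hn
  have hfin : (Finset.univ : Finset (Fin n)).Nonempty := Finset.univ_nonempty
  obtain ⟨i, -, hi⟩ := Finset.exists_max_image Finset.univ (fun j => |x j|) hfin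
  set P : ℝ := (2 : ℝ) ^ p with hPdef
  have hP4 : (4 : ℝ) ≤ P := by
    calc (4 : ℝ) = 2 ^ 2 := by norm_num
      _ ≤ 2 ^ p := pow_le_pow_right₀ one_le_two hp
  have hP0 : (0 : ℝ) < P := by positivity
  set N := Real.sqrt n with hNdef
  have hN1 : 1 ≤ N := by
    rw [hNdef, show (1:ℝ) = Real.sqrt 1 by simp]
    exact Real.sqrt_le_sqrt (by exact_mod_cast hn)
  have hlam : (2 : ℝ) ^ (2 * p + 2) * N = 4 * P ^ 2 * N := by
    have h : (2 : ℝ) ^ (2 * p + 2) = 4 * ((2:ℝ) ^ p) ^ 2 := by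
      rw [pow_add, ← pow_mul, mul_comm 2 p]; ring
    rw [hPdef, h]
  set M := mFun x with hMdef
  have hM0 : 0 < M := mFun_pos x
  have hM1 : M ≤ 1 := mFun_le_one x
  set t := 4 * P ^ 2 * N * M with htdef
  have ht0 : 0 < t := by positivity
  set σ : ℝ := if 0 ≤ x i then 1 else -1 with hσ
  have hσx : σ * x i = |x i| := by
    rw [hσ]; split_ifs with h
    · rw [one_mul, abs_of_nonneg h]
    · rw [neg_one_mul, abs_of_neg (not_le.1 h)]
  have hσ1 : |σ| = 1 := by rw [hσ]; split_ifs <;> simp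
  have hσsq : σ * σ = 1 := by rw [hσ]; split_ifs <;> norm_num
  set y : E n := x + EuclideanSpace.single i (t * σ) with hy
  have hyi : y i = x i + t * σ := by
    rw [hy]
    simp [EuclideanSpace.single_apply]
  have hyiabs : |y i| = |x i| + t := by
    have h1 : σ * y i = |x i| + t := by
      rw [hyi, mul_add, hσx, mul_comm t σ, ← mul_assoc, hσsq, one_mul]
    have h2 : (0:ℝ) < |x i| + t := by positivity
    calc |y i| = |σ| * |y i| := by rw [hσ1, one_mul]
      _ = |σ * y i| := (abs_mul _ _).symm
      _ = |x i| + t := by rw [h1]; exact abs_of_pos h2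
  have hdxy : dist x y = t := by
    rw [hy, dist_eq_norm]
    have h3 : x - (x + EuclideanSpace.single i (t * σ)) = -EuclideanSpace.single i (t * σ) := by
      abel
    rw [h3, norm_neg, EuclideanSpace.norm_single, Real.norm_eq_abs, abs_mul, hσ1, mul_one,
      abs_of_pos ht0]
  have hl2 : (2 : ℝ) ^ l ≤ 2 * P := by
    rw [hPdef, show (2:ℝ) * 2 ^ p = 2 ^ (p+1) by rw [pow_succ]; ring]
    exact pow_le_pow_right₀ one_le_two hl
  have hl1 : (1 : ℝ) ≤ (2 : ℝ) ^ l := one_le_pow₀ one_le_two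
  suffices hyc : y ∈ (plusC n (2 ^ p) (dyadicCube n l v))ᶜ by
    calc infDist x (plusC n (2 ^ p) (dyadicCube n l v))ᶜ ≤ dist x y :=
          infDist_le_dist_of_mem hyc
      _ = 2 ^ (2 * p + 2) * Real.sqrt n * mFun x := by rw [hdxy, htdef, hlam]
  intro hyA
  simp only [plusC, Set.mem_setOf_eq] at hyA
  obtain ⟨r, hr0, hrle, q, hqb, hqQ⟩ := hyA
  have hq_abs : ∀ j, |q j| ≤ (2 : ℝ) ^ l := layer_abs_le (hQ hqQ)
  have hdyq : dist y q < r := by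
    rw [mem_ball, dist_comm] at hqb
    exact hqb
  have hlow : |x i| + t - (2 : ℝ) ^ l ≤ dist y q := by
    have h1 : |y i - q i| ≤ dist y q := by
      have := coord_dist_le y q i
      rwa [Real.dist_eq] at this
    have h2 : |y i| - |q i| ≤ |y i - q i| := abs_sub_abs_le_abs_sub _ _
    rw [hyiabs] at h2
    have h3 := hq_abs i
    linarith
  have hmy1 : mFun y ≤ 1 := mFun_le_one y
  by_cases hxP : ‖x‖ ≤ P
  · -- Case A : ‖x‖ ≤ 2^p, so M ≥ 1/P and t ≥ 4PN ≥ 4P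
    have hMP : P⁻¹ ≤ M := by
      rw [hMdef]; unfold mFun; split_ifs with h
      · exact inv_le_one_of_one_le₀ (by linarith)
      · exact inv_anti₀ (by linarith [not_le.1 h]) hxP
    have ht4P : 4 * P ≤ t := by
      rw [htdef]
      have h1 : 4 * P = 4 * P ^ 2 * P⁻¹ := by field_simp
      rw [h1]
      have h2 : P⁻¹ ≤ N * M := by
        calc P⁻¹ = 1 * P⁻¹ := (one_mul _).symm
          _ ≤ N * M := mul_le_mul hN1 hMP (by positivity) (by linarith)
      calc 4 * P ^ 2 * P⁻¹ ≤ 4 * P ^ 2 * (N * M) := by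
            apply mul_le_mul_of_nonneg_left h2 (by positivity)
        _ = 4 * P ^ 2 * N * M := by ring
    have hrP : r ≤ P := by
      calc r ≤ P * mFun y := hrle
        _ ≤ P * 1 := mul_le_mul_of_nonneg_left hmy1 (le_of_lt hP0)
        _ = P := mul_one P
    have : (0:ℝ) ≤ |x i| := abs_nonneg _
    linarith
  · -- Case B : ‖x‖ > 2^p
    push_neg at hxP
    have hx0 : (0:ℝ) < ‖x‖ := by linarith
    have hx1 : (1:ℝ) < ‖x‖ := by linarith
    have hMx : M = ‖x‖⁻¹ := by
      rw [hMdef]; unfold mFun; rw [if_neg (not_le.2 hx1)]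
    simp only [plusC, Set.mem_setOf_eq] at hx
    obtain ⟨r', hr'0, hr'le, q', hq'b, hq'Q⟩ := hx
    have hdxq' : dist x q' < r' := by
      rw [mem_ball, dist_comm] at hq'b
      exact hq'b
    have hPM1 : P * M < 1 := by
      rw [hMx, ← div_eq_mul_inv]
      exact (div_lt_one hx0).2 hxP
    have hdxq'1 : dist x q' < 1 := lt_of_lt_of_le hdxq' (le_trans hr'le (le_of_lt hPM1))
    have hq'_abs : ∀ j, |q' j| ≤ (2 : ℝ) ^ l := layer_abs_le (hQ hq'Q)
    have hq'norm : ‖q'‖ ≤ (2:ℝ) ^ l * N :=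
      norm_le_of_abs_le q' _ (by positivity) hq'_abs
    have hxnorm : ‖x‖ ≤ (2:ℝ) ^ l * N + 1 := by
      have h1 : ‖x‖ - ‖q'‖ ≤ ‖x - q'‖ := norm_sub_norm_le x q'
      have h2 : dist x q' = ‖x - q'‖ := dist_eq_norm x q'
      linarith
    have htx : t * ‖x‖ = 4 * P ^ 2 * N := by
      rw [htdef, hMx]; field_simp
    have hS1 : P ≤ |x i| + t ∧ (2:ℝ) ^ l + 1 ≤ |x i| + t := by
      have habs0 : (0:ℝ) ≤ |x i| := abs_nonneg _
      by_cases hlp : l ≤ p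
      · -- t ≥ 2P
        have h2lP : (2:ℝ) ^ l ≤ P := pow_le_pow_right₀ one_le_two hlp
        have h2lN : (1:ℝ) ≤ (2:ℝ) ^ l * N := by nlinarith
        have ht2P : 2 * P ≤ t := by
          apply le_of_mul_le_mul_right _ hx0
          rw [htx]
          have hxle : ‖x‖ ≤ 2 * ((2:ℝ) ^ l * N) := by linarith
          calc 2 * P * ‖x‖ ≤ 2 * P * (2 * ((2:ℝ) ^ l * N)) :=
                mul_le_mul_of_nonneg_left hxle (by positivity)
            _ = 4 * (2:ℝ) ^ l * N * P := by ring
            _ ≤ 4 * P ^ 2 * N := by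
                nlinarith [mul_le_mul_of_nonneg_right h2lP (show (0:ℝ) ≤ 4 * N * P by positivity)]
        constructor
        · linarith
        · linarith
      · -- l = p + 1
        have hlp1 : l = p + 1 := le_antisymm hl (not_le.1 hlp)
        have h2l : (2:ℝ) ^ l = 2 * P := by
          rw [hlp1, hPdef, pow_succ]; ring
        have h2l1 : (2:ℝ) ^ (l - 1) = P := by
          rw [hlp1, Nat.add_sub_cancel, hPdef]
        obtain ⟨j, hj⟩ := layer_exists_ge (hQ hq'Q) (by omega)
        rw [h2l1] at hj
        have hxj : P - 1 ≤ |x j| := by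
          have h1 : |q' j| - |x j| ≤ |q' j - x j| := abs_sub_abs_le_abs_sub _ _
          have h2 : |q' j - x j| ≤ dist q' x := by
            have := coord_dist_le q' x j
            rwa [Real.dist_eq] at this
          rw [dist_comm] at h2
          linarith
        have hxi : P - 1 ≤ |x i| := le_trans hxj (hi j (Finset.mem_univ j))
        have ht2P : 2 * P - 1 ≤ t := by
          apply le_of_mul_le_mul_right _ hx0
          rw [htx]
          rw [h2l] at hxnorm
          nlinarith [mul_le_mul_of_nonneg_left hxnorm (show (0:ℝ) ≤ 2 * P - 1 by linarith),
            mul_le_mul_of_nonneg_left hN1 (show (0:ℝ) ≤ 2 * P by linarith)]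
        constructor
        · linarith
        · rw [h2l]; linarith
    obtain ⟨hSP, hSl⟩ := hS1
    have hynorm : |x i| + t ≤ ‖y‖ := by
      rw [← hyiabs]; exact abs_coord_le_norm y i
    have hy1 : (1:ℝ) < ‖y‖ := by linarith
    have hmy : mFun y = ‖y‖⁻¹ := by
      unfold mFun; rw [if_neg (not_le.2 hy1)]
    have hr1 : r ≤ 1 := by
      have h1 : P * mFun y ≤ 1 := by
        rw [hmy, ← div_eq_mul_inv]
        exact (div_le_one (by linarith)).2 (by linarith)
      linarith [hrle]
    linarith
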